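/- arXiv:2407.18144 — 2 statements merged into one kernel-verified Lean document; each statement's English description precedes it below -/
import Mathlib

section
/- Let A_1, …, A_n be a finite set of events in a probability space, and suppose that for each i ∈ [n] there exists a set B(i) ⊆ [n] such that A_i is mutually independent from the family {A_j : j ∈ [n] ∖ B(i)}. Suppose also that for each i ∈ [n] we have P[A_i] < 1/2 and Σ_{j ∈ B(i)} P[A_j] ≤ 1/4. Then P[A_1ᶜ ∩ ⋯ ∩ A_nᶜ] > 0. -/
open MeasureTheory
open scoped ENNReal

/-!
Write `N T` (`noneOccur A T`) for the event that no `A j` with `j ∈ T` occurs. By strong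
induction on `T` one shows `μ (A i ∩ N T) ≤ 2 μ(A i) μ(N T)`: removing `B i` from `T` makes `A i`
independent of the avoidance event, and removing it costs at most a factor `2`, because the part
of `N (T \ B i)` outside `N T` is covered by the events `A j ∩ N (T \ B i)`, `j ∈ T ∩ B i`, whose
total measure is at most `2 · (1/4) · μ(N (T \ B i))` by induction. With `μ(A i) < 1/2` the bound
gives `μ(N (insert i T)) ≥ (1 - 2 μ(A i)) μ(N T) > 0`.
-/

theorem ENNReal.le_two_mul_of_le_add_half {x y : ℝ≥0∞} (hx : x ≠ ∞) (h : x ≤ y + x / 2) :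
    x ≤ 2 * y := by
  have hhalf : x / 2 ≤ y := by
    rw [← ENNReal.sub_half hx]
    exact tsub_le_iff_right.mpr h
  calc x = x / 2 + x / 2 := (ENNReal.add_halves x).symm
    _ ≤ y + y := add_le_add hhalf hhalf
    _ = 2 * y := (two_mul y).symm

section LocalLemma

variable {Ω ι : Type*} {A : ι → Set Ω}

def noneOccur (A : ι → Set Ω) (T : Finset ι) : Set Ω := ⋂ j ∈ T, (A j)ᶜ

theorem noneOccur_empty : noneOccur A ∅ = Set.univ := by
  simp [noneOccur]

theorem noneOccur_univ [Fintype ι] : noneOccur A Finset.univ = ⋂ i, (A i)ᶜ := by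
  simp [noneOccur]

theorem noneOccur_insert [DecidableEq ι] (i : ι) (T : Finset ι) :
    noneOccur A (insert i T) = noneOccur A T \ A i := by
  simp [noneOccur, Set.sdiff_eq, Set.inter_comm]

theorem noneOccur_anti {T₁ T₂ : Finset ι} (h : T₁ ⊆ T₂) : noneOccur A T₂ ⊆ noneOccur A T₁ :=
  Set.biInter_subset_biInter_left fun _ hj ↦ h hj

theorem noneOccur_sdiff_subset [DecidableEq ι] (T S : Finset ι) :
    noneOccur A (T \ S) ⊆ noneOccur A T ∪ ⋃ j ∈ T ∩ S, A j ∩ noneOccur A (T \ S) := by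
  intro x hx
  by_cases hT : x ∈ noneOccur A T
  · exact Or.inl hT
  · simp only [noneOccur, Set.mem_iInter, Set.mem_compl_iff, not_forall, not_not] at hT
    obtain ⟨j, hjT, hxj⟩ := hT
    have hjS : j ∈ S := by
      by_contra hjS
      exact Set.mem_iInter₂.mp hx j (Finset.mem_sdiff.mpr ⟨hjT, hjS⟩) hxj
    exact Or.inr (Set.mem_biUnion (Finset.mem_inter.mpr ⟨hjT, hjS⟩) ⟨hxj, hx⟩)

variable [MeasurableSpace Ω] {μ : Measure Ω}

theorem measure_noneOccur_sdiff_le [IsFiniteMeasure μ] [DecidableEq ι] {T S : Finset ι}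
    (hS : ∑ j ∈ S, μ (A j) ≤ 1 / 4)
    (hbound : ∀ j ∈ T ∩ S,
      μ (A j ∩ noneOccur A (T \ S)) ≤ 2 * μ (A j) * μ (noneOccur A (T \ S))) :
    μ (noneOccur A (T \ S)) ≤ 2 * μ (noneOccur A T) := by
  set N := μ (noneOccur A (T \ S))
  have hcover : ∑ j ∈ T ∩ S, μ (A j ∩ noneOccur A (T \ S)) ≤ N / 2 :=
    calc ∑ j ∈ T ∩ S, μ (A j ∩ noneOccur A (T \ S))
        ≤ ∑ j ∈ T ∩ S, 2 * μ (A j) * N := Finset.sum_le_sum hbound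
      _ = 2 * (∑ j ∈ T ∩ S, μ (A j)) * N := by rw [Finset.mul_sum, Finset.sum_mul]
      _ ≤ 2 * (1 / 4) * N := by
        gcongr
        exact (Finset.sum_le_sum_of_subset Finset.inter_subset_right).trans hS
      _ = N / 2 := by
        have hquarter : (2 : ℝ≥0∞) * (1 / 4) = 1 / 2 := by
          rw [ENNReal.eq_div_iff two_ne_zero ENNReal.ofNat_ne_top, ← mul_assoc]
          norm_num
          exact ENNReal.mul_inv_cancel (by norm_num) (by norm_num)
        rw [hquarter, mul_comm, ← div_eq_mul_one_div]
  refine ENNReal.le_two_mul_of_le_add_half (measure_ne_top μ _) ?_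
  calc N ≤ μ (noneOccur A T ∪ ⋃ j ∈ T ∩ S, A j ∩ noneOccur A (T \ S)) :=
        measure_mono (noneOccur_sdiff_subset T S)
    _ ≤ μ (noneOccur A T) + ∑ j ∈ T ∩ S, μ (A j ∩ noneOccur A (T \ S)) :=
        (measure_union_le _ _).trans (by gcongr; exact measure_biUnion_finset_le _ _)
    _ ≤ μ (noneOccur A T) + N / 2 := by gcongr

theorem measure_inter_noneOccur_le [IsFiniteMeasure μ] [DecidableEq ι] {B : ι → Finset ι}
    (hindep : ∀ i T, Disjoint T (B i) →
      μ (A i ∩ noneOccur A T) = μ (A i) * μ (noneOccur A T))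
    (hsum : ∀ i, ∑ j ∈ B i, μ (A j) ≤ 1 / 4) (T : Finset ι) (i : ι) :
    μ (A i ∩ noneOccur A T) ≤ 2 * μ (A i) * μ (noneOccur A T) := by
  induction T using Finset.strongInduction generalizing i with
  | H T ih =>
    have hsdiff : μ (noneOccur A (T \ B i)) ≤ 2 * μ (noneOccur A T) := by
      refine measure_noneOccur_sdiff_le (hsum i) fun j hj ↦ ih _ ?_ j
      obtain ⟨hjT, hjB⟩ := Finset.mem_inter.mp hj
      exact (Finset.ssubset_iff_of_subset Finset.sdiff_subset).mpr
        ⟨j, hjT, fun h ↦ (Finset.mem_sdiff.mp h).2 hjB⟩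
    calc μ (A i ∩ noneOccur A T) ≤ μ (A i ∩ noneOccur A (T \ B i)) :=
          measure_mono (Set.inter_subset_inter_right _ (noneOccur_anti Finset.sdiff_subset))
      _ = μ (A i) * μ (noneOccur A (T \ B i)) := hindep i _ Finset.sdiff_disjoint
      _ ≤ μ (A i) * (2 * μ (noneOccur A T)) := by gcongr
      _ = 2 * μ (A i) * μ (noneOccur A T) := by ring

theorem measure_noneOccur_pos [IsFiniteMeasure μ] [NeZero μ] [DecidableEq ι]
    (hhalf : ∀ i, μ (A i) < 1 / 2)
    (hbound : ∀ T i, μ (A i ∩ noneOccur A T) ≤ 2 * μ (A i) * μ (noneOccur A T))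
    (T : Finset ι) : 0 < μ (noneOccur A T) := by
  induction T using Finset.induction_on with
  | empty => rw [noneOccur_empty]; exact Measure.measure_univ_pos.mpr (NeZero.ne μ)
  | insert i T _ ih =>
    rw [noneOccur_insert, pos_iff_ne_zero]
    intro hzero
    have htwo : 2 * μ (A i) < 1 := by
      calc 2 * μ (A i) < 2 * (1 / 2) := ENNReal.mul_lt_mul_right (by simp) (by simp) (hhalf i)
        _ = 1 := ENNReal.mul_div_cancel two_ne_zero ENNReal.ofNat_ne_top
    refine (lt_irrefl (μ (noneOccur A T))) ?_
    calc μ (noneOccur A T) ≤ μ (noneOccur A T ∩ A i) + μ (noneOccur A T \ A i) :=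
          measure_le_inter_add_sdiff μ _ _
      _ = μ (A i ∩ noneOccur A T) := by rw [hzero, add_zero, Set.inter_comm]
      _ ≤ 2 * μ (A i) * μ (noneOccur A T) := hbound T i
      _ < 1 * μ (noneOccur A T) :=
        ENNReal.mul_lt_mul_left ih.ne' (measure_ne_top μ _) htwo
      _ = μ (noneOccur A T) := one_mul _

end LocalLemma

theorem statement7_general {Ω : Type*} [MeasurableSpace Ω] (μ : Measure Ω)
    [IsProbabilityMeasure μ] (n : ℕ) (A : Fin n → Set Ω)
    (B : Fin n → Finset (Fin n))
    (hindep : ∀ i : Fin n, ∀ S1 S2 : Finset (Fin n),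
      (∀ j ∈ S1, j ∉ B i) → (∀ j ∈ S2, j ∉ B i) → Disjoint S1 S2 →
      μ (A i ∩ ((⋂ j ∈ S1, A j) ∩ (⋂ j ∈ S2, (A j)ᶜ))) =
        μ (A i) * μ ((⋂ j ∈ S1, A j) ∩ (⋂ j ∈ S2, (A j)ᶜ)))
    (hhalf : ∀ i, μ (A i) < 1 / 2)
    (hsum : ∀ i, (∑ j ∈ B i, μ (A j)) ≤ 1 / 4) :
    0 < μ (⋂ i, (A i)ᶜ) := by
  have hindep_noneOccur : ∀ i T, Disjoint T (B i) →
      μ (A i ∩ noneOccur A T) = μ (A i) * μ (noneOccur A T) := fun i T hT ↦ by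
    simpa [noneOccur] using
      hindep i ∅ T (by simp) (fun j hj ↦ Finset.disjoint_left.mp hT hj) (by simp)
  rw [← noneOccur_univ]
  exact measure_noneOccur_pos hhalf (measure_inter_noneOccur_le hindep_noneOccur hsum) _

/-- Lemma 3.3 (a version of the Lovász Local Lemma).
Mutual independence of `A i` from `{A j : j ∉ B i}` is expressed by:
for all disjoint families `S1, S2` of indices outside `B i`,
`μ (A i ∩ ⋂_{j ∈ S1} A j ∩ ⋂_{j ∈ S2} (A j)ᶜ) = μ (A i) * μ (⋂_{j ∈ S1} A j ∩ ⋂_{j ∈ S2} (A j)ᶜ)`. -/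
theorem statement7 {Ω : Type*} [MeasurableSpace Ω] (μ : Measure Ω)
    [IsProbabilityMeasure μ] (n : ℕ) (A : Fin n → Set Ω)
    (hmeas : ∀ i, MeasurableSet (A i)) (B : Fin n → Finset (Fin n))
    (hindep : ∀ i : Fin n, ∀ S1 S2 : Finset (Fin n),
      (∀ j ∈ S1, j ∉ B i) → (∀ j ∈ S2, j ∉ B i) → Disjoint S1 S2 →
      μ (A i ∩ ((⋂ j ∈ S1, A j) ∩ (⋂ j ∈ S2, (A j)ᶜ))) =
        μ (A i) * μ ((⋂ j ∈ S1, A j) ∩ (⋂ j ∈ S2, (A j)ᶜ)))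
    (hhalf : ∀ i, μ (A i) < 1 / 2)
    (hsum : ∀ i, (∑ j ∈ B i, μ (A j)) ≤ 1 / 4) :
    0 < μ (⋂ i, (A i)ᶜ) :=
  statement7_general μ n A B hindep hhalf hsum
end

section
/- Fix c0 > 0, ℓ ≥ 2 and s > t ≥ 2. There exist an integer ℓ′ and ε0 > 0, depending only on s, t and ℓ, such that for all ε′ ∈ (0, ε0) and ε ∈ (0, ε0) there exists m0 with the following property for all m ≥ m0 and c ≥ c0. Let G be a t-graph on m vertices and let K be a collection of s-element vertex subsets, each inducing a clique in G, such that every edge of G is contained in (1 ± m^(−ε))·c·m^(s−t) elements of K. Let H be the (s choose t)-graph on vertex set E(G) whose edges are the sets {T ⊆ S : |T| = t} for S ∈ K (each edge identified with the corresponding s-set S). Then the conflict hypergraph C for H whose conflicts are all minimal bad j-configurations with 3 ≤ j ≤ ℓ is (d, ℓ′, ε′)-bounded, where d = (1 + m^(−ε))·c·m^(s−t). -/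
/-!
Every conflict comes from a minimal bad configuration `J` of at most `ℓ` sets of `K`, and it is
determined by `J`. A `j`-configuration spans at most `(s - t) j + t` vertices, so conflicts
through a fixed set `F` of edges of `H` are counted by choosing the at most
`(s - t) j + t - |⋃ F|` vertices outside the `s`-sets of `F` (at most `m` ways each) and then a
family of `s`-subsets of the resulting vertex set (boundedly many ways). For `F = {e}` this gives
`O(m^{(s-t)(j-1)}) = O(d^{j-1})`. For `|F| = j' ≥ 2` minimality makes the `s`-sets of `F` a
non-bad configuration, so they span more than `(s - t) j' + t` vertices, which saves a whole
factor of `m` against `d^{j-j'} ≈ m^{(s-t)(j-j')}`; when `(s - t) ε' ≤ 1/2`, half of it absorbs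
`d^{ε'}` and the other half the constant.
-/

open Finset
open scoped Classical

noncomputable section

namespace CFM

universe u

variable {α : Type u} [DecidableEq α]

/-- The number of edges of the hypergraph `G` containing the vertex set `U`. -/
def degOf (G : Finset (Finset α)) (U : Finset α) : ℕ :=
  (G.filter fun e => U ⊆ e).card

/-- The degree of a single vertex. -/
def degv (G : Finset (Finset α)) (v : α) : ℕ := degOf G {v}

/-- The codegree of a pair of vertices. -/
def deg2 (G : Finset (Finset α)) (u v : α) : ℕ := degOf G {u, v}

/-- The minimum vertex degree over the vertex subset `P`. -/
def minDegOn (G : Finset (Finset α)) (P : Finset α) : ℕ :=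
  sInf ((fun v => degv G v) '' (P : Set α))

/-- A matching: a set of pairwise disjoint edges. -/
def IsMatching (M : Finset (Finset α)) : Prop :=
  ∀ e ∈ M, ∀ f ∈ M, e ≠ f → Disjoint e f

/-- The conflicts of size `j`. -/
def sized (C : Finset (Finset α)) (j : ℕ) : Finset (Finset α) :=
  C.filter fun c => c.card = j

/-- `E` contains no conflict from `C`. -/
def CFree (E : Finset α) (C : Finset (Finset α)) : Prop :=
  ∀ c ∈ C, ¬ c ⊆ E

/-- `C` is a `(d, ℓ, ε)`-bounded conflict hypergraph. -/
def Bounded (C : Finset (Finset α)) (d : ℝ) (ℓ : ℕ) (ε : ℝ) : Prop :=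
  (∀ c ∈ C, 3 ≤ c.card ∧ c.card ≤ ℓ) ∧
  (∀ j : ℕ, 3 ≤ j → j ≤ ℓ → ∀ e : α,
    (degOf (sized C j) {e} : ℝ) ≤ (ℓ : ℝ) * d ^ ((j : ℝ) - 1)) ∧
  (∀ j j' : ℕ, 3 ≤ j → j ≤ ℓ → 2 ≤ j' → j' + 1 ≤ j → ∀ F : Finset α, F.card = j' →
    (degOf (sized C j) F : ℝ) ≤ d ^ ((j : ℝ) - (j' : ℝ) - ε))

/-- The link of `e` in the conflict hypergraph `C`: the semiconflicts completed by `e`. -/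
def link (C : Finset (Finset α)) (e : α) : Finset (Finset α) :=
  (C.filter fun c => e ∈ c).image fun c => c.erase e

/-- `e, f` form an `(ε, C)`-conflict-sharing pair. -/
def ConflictSharing (C : Finset (Finset α)) (d : ℝ) (ℓ : ℕ) (ε : ℝ) (e f : α) : Prop :=
  ∃ j' : ℕ, 1 ≤ j' ∧ j' + 1 ≤ ℓ ∧
    d ^ ((j' : ℝ) - ε) < ((sized (link C e) j' ∩ sized (link C f) j').card : ℝ)


variable {V : Type u} [DecidableEq V]

/-- An `s`-set `S` induces a clique in the `t`-graph `G`. -/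
def InducesClique (G : Finset (Finset V)) (t : ℕ) (S : Finset V) : Prop :=
  ∀ T ⊆ S, T.card = t → T ∈ G

/-- A bad configuration: a family `J` of `s`-sets with pairwise intersections of size
at most `t - 1` spanning at most `(s - t)|J| + t` points. -/
def BadConfig (s t : ℕ) (J : Finset (Finset V)) : Prop :=
  (∀ S ∈ J, ∀ S' ∈ J, S ≠ S' → (S ∩ S').card ≤ t - 1) ∧
  (J.sup id).card ≤ (s - t) * J.card + t

/-- A minimal bad configuration: a bad configuration containing no smaller bad
`j'`-configuration with `2 ≤ j' < |J|`. -/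
def MinimalBad (s t : ℕ) (J : Finset (Finset V)) : Prop :=
  BadConfig s t J ∧ ∀ J' ⊆ J, 2 ≤ J'.card → J'.card < J.card → ¬ BadConfig s t J'

/-- The conflict hypergraph for the `(s choose t)`-graph `H` on vertex set `E(G)`
whose edges are `{T ⊆ S : |T| = t}` for `S ∈ K`: the conflicts are the minimal bad
`j`-configurations with `3 ≤ j ≤ ℓ` (each `s`-set identified with its edge of `H`). -/
def confSystem (K : Finset (Finset V)) (s t ℓ : ℕ) :
    Finset (Finset (Finset (Finset V))) :=
  (K.powerset.filter fun J => 3 ≤ J.card ∧ J.card ≤ ℓ ∧ MinimalBad s t J).image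
    fun J => J.image fun S => S.powersetCard t


lemma sup_id_powersetCard {t : ℕ} (ht : t ≠ 0) {S : Finset V} (hS : t ≤ #S) :
    (S.powersetCard t).sup id = S := by
  obtain ⟨n, rfl⟩ := Nat.exists_eq_succ_of_ne_zero ht
  exact powersetCard_sup S n hS

lemma card_finsets_card_le [Fintype V] (hV : 1 ≤ Fintype.card V) (r : ℕ) :
    #{B : Finset V | #B ≤ r} ≤ (r + 1) * Fintype.card V ^ r := by
  have hsub : ({B : Finset V | #B ≤ r} : Finset _) ⊆
      (range (r + 1)).biUnion fun i => univ.powersetCard i := fun B hB => by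
    simp only [mem_filter, mem_univ, true_and] at hB
    simpa using Nat.lt_succ_of_le hB
  calc #{B : Finset V | #B ≤ r}
      ≤ ∑ i ∈ range (r + 1), #(univ.powersetCard i : Finset (Finset V)) :=
        (card_le_card hsub).trans card_biUnion_le
    _ ≤ ∑ _i ∈ range (r + 1), Fintype.card V ^ r := by
        refine sum_le_sum fun i hi => ?_
        rw [card_powersetCard, card_univ]
        exact (Nat.choose_le_pow _ _).trans
          (Nat.pow_le_pow_right hV (Nat.lt_succ_iff.mp (mem_range.mp hi)))
    _ = (r + 1) * Fintype.card V ^ r := by rw [sum_const, card_range, smul_eq_mul]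

lemma card_supersets_le [Fintype V] (hV : 1 ≤ Fintype.card V) (A : Finset V) (n : ℕ) :
    #{U : Finset V | A ⊆ U ∧ #U ≤ n} ≤ (n + 1) * Fintype.card V ^ (n - #A) := by
  have hmaps : Set.MapsTo (· \ A) ({U : Finset V | A ⊆ U ∧ #U ≤ n} : Finset _)
      ({B : Finset V | #B ≤ n - #A} : Finset _) := fun U hU => by
    simp only [coe_filter, mem_univ, true_and, Set.mem_ofPred_eq] at hU ⊢
    rw [card_sdiff_of_subset hU.1]
    omega
  have hinj : Set.InjOn (· \ A) ({U : Finset V | A ⊆ U ∧ #U ≤ n} : Finset _) :=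
    fun U hU U' hU' h => by
      simp only [coe_filter, mem_univ, true_and, Set.mem_ofPred_eq] at hU hU'
      rw [← sdiff_union_of_subset hU.1, ← sdiff_union_of_subset hU'.1]
      exact congrArg (· ∪ A) h
  calc _ ≤ #{B : Finset V | #B ≤ n - #A} := card_le_card_of_injOn _ hmaps hinj
    _ ≤ (n - #A + 1) * Fintype.card V ^ (n - #A) := card_finsets_card_le hV _
    _ ≤ (n + 1) * Fintype.card V ^ (n - #A) := by gcongr; omega

lemma card_uniform_families_le [Fintype V] (hV : 1 ≤ Fintype.card V) (A : Finset V)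
    (s n : ℕ) :
    #{J : Finset (Finset V) | A ⊆ J.sup id ∧ (∀ S ∈ J, #S = s) ∧ #(J.sup id) ≤ n} ≤
      (n + 1) * Fintype.card V ^ (n - #A) * 2 ^ n.choose s := by
  set T : Finset (Finset (Finset V)) :=
    {J | A ⊆ J.sup id ∧ (∀ S ∈ J, #S = s) ∧ #(J.sup id) ≤ n}
  have hfiber : ∀ U ∈ T.image (·.sup id), #{J ∈ T | J.sup id = U} ≤ 2 ^ n.choose s := by
    intro U hU
    obtain ⟨J, hJ, rfl⟩ := mem_image.mp hU
    have hsub : ({J' ∈ T | J'.sup id = J.sup id} : Finset _) ⊆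
        ((J.sup id).powersetCard s).powerset := fun J' hJ' => by
      simp only [T, mem_filter, mem_univ, true_and] at hJ'
      exact mem_powerset.mpr fun S hS => mem_powersetCard.mpr
        ⟨hJ'.2 ▸ le_sup (f := id) hS, hJ'.1.2.1 S hS⟩
    have hn : #(J.sup id) ≤ n := by
      simp only [T, mem_filter, mem_univ, true_and] at hJ
      exact hJ.2.2
    calc _ ≤ 2 ^ #((J.sup id).powersetCard s) := by
          simpa only [card_powerset] using card_le_card hsub
      _ ≤ 2 ^ n.choose s := by
          rw [card_powersetCard]
          exact Nat.pow_le_pow_right two_pos (Nat.choose_le_choose s hn)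
  have himage : T.image (·.sup id) ⊆ ({U : Finset V | A ⊆ U ∧ #U ≤ n} : Finset _) := fun U hU => by
    obtain ⟨J, hJ, rfl⟩ := mem_image.mp hU
    simp only [T, mem_filter, mem_univ, true_and] at hJ ⊢
    exact ⟨hJ.1, hJ.2.2⟩
  calc #T ≤ 2 ^ n.choose s * #(T.image (·.sup id)) := card_le_mul_card_image T _ hfiber
    _ ≤ 2 ^ n.choose s * ((n + 1) * Fintype.card V ^ (n - #A)) :=
        Nat.mul_le_mul_left _ ((card_le_card himage).trans (card_supersets_le hV A n))
    _ = _ := Nat.mul_comm _ _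

lemma mul_pow_mul_le {a x d K L : ℝ} {q i ℓ : ℕ} (ha0 : 0 ≤ a) (ha1 : a ≤ 1) (hx : 0 ≤ x)
    (hd : a * x ^ q ≤ d) (hL : 0 ≤ L) (hK : K ≤ L * a ^ ℓ) (hi : i ≤ ℓ) :
    K * x ^ (q * i) ≤ L * d ^ i :=
  calc K * x ^ (q * i) ≤ L * a ^ ℓ * x ^ (q * i) := by gcongr
    _ ≤ L * a ^ i * x ^ (q * i) := by gcongr L * ?_ * _; exact pow_le_pow_of_le_one ha0 ha1 hi
    _ = L * (a * x ^ q) ^ i := by rw [mul_pow, pow_mul]; ring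
    _ ≤ L * d ^ i := by gcongr

lemma mul_pow_sub_one_le_rpow {a x d K ε : ℝ} {q k ℓ : ℕ} (ha0 : 0 < a) (ha1 : a ≤ 1)
    (hx : 1 ≤ x) (hd : a * x ^ q ≤ d) (hK : K ≤ a ^ ℓ * √x) (hq : 1 ≤ q) (hk : 1 ≤ k)
    (hkℓ : k ≤ ℓ) (hε0 : 0 ≤ ε) (hε : q * ε ≤ 1 / 2) :
    K * x ^ (q * k - 1) ≤ d ^ ((k : ℝ) - ε) := by
  have hx0 : 0 ≤ x := zero_le_one.trans hx
  have hqR : (1 : ℝ) ≤ q := by exact_mod_cast hq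
  have hkR : (1 : ℝ) ≤ k := by exact_mod_cast hk
  have hqk : ((q * k - 1 : ℕ) : ℝ) = q * k - 1 := by
    rw [Nat.cast_sub (Nat.mul_pos hq hk), Nat.cast_mul, Nat.cast_one]
  -- the `√x` of room in `hK` pays for the loss `x ^ (q * ε) ≤ √x` in the exponent
  calc K * x ^ (q * k - 1) ≤ a ^ ℓ * √x * x ^ (q * k - 1) := by gcongr
    _ = a ^ ℓ * x ^ ((q : ℝ) * k - 1 / 2) := by
        rw [Real.sqrt_eq_rpow, ← Real.rpow_natCast x, hqk, mul_assoc,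
          ← Real.rpow_add (by linarith)]
        ring_nf
    _ ≤ a ^ ((k : ℝ) - ε) * x ^ ((q : ℝ) * ((k : ℝ) - ε)) := by
        have hkℓR : (k : ℝ) ≤ ℓ := by exact_mod_cast hkℓ
        refine mul_le_mul ?_ (Real.rpow_le_rpow_of_exponent_le hx (by nlinarith))
          (by positivity) (by positivity)
        rw [← Real.rpow_natCast]
        exact Real.rpow_le_rpow_of_exponent_ge ha0 ha1 (by linarith)
    _ = (a * x ^ q) ^ ((k : ℝ) - ε) := by
        rw [Real.mul_rpow ha0.le (by positivity), ← Real.rpow_natCast x q, ← Real.rpow_mul hx0]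
    _ ≤ d ^ ((k : ℝ) - ε) := Real.rpow_le_rpow (by positivity) hd (by nlinarith)

lemma exists_of_degOf_sized_pos {C : Finset (Finset α)} {j : ℕ} {F : Finset α}
    (h : 0 < degOf (sized C j) F) : ∃ c ∈ C, #c = j ∧ F ⊆ c := by
  obtain ⟨c, hc⟩ := card_pos.mp h
  simp only [sized, mem_filter] at hc
  exact ⟨c, hc.1.1, hc.1.2, hc.2⟩

/-- The paper identifies an edge of `H`, the family of `t`-subsets of an `s`-set `S`,
with `S`; `configOf` undoes this identification, since the union of that family is `S`. -/
def configOf (F : Finset (Finset (Finset V))) : Finset (Finset V) := F.image (·.sup id)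

lemma configOf_mono {F F' : Finset (Finset (Finset V))} (h : F ⊆ F') :
    configOf F ⊆ configOf F' :=
  image_subset_image h

lemma configOf_image_powersetCard {t : ℕ} (ht : t ≠ 0) {J : Finset (Finset V)}
    (hJ : ∀ S ∈ J, t ≤ #S) : configOf (J.image (·.powersetCard t)) = J := by
  rw [configOf, image_image]
  exact (image_congr fun S hS => sup_id_powersetCard ht (hJ S hS)).trans image_id

lemma card_configOf_of_subset {t : ℕ} (ht : t ≠ 0) {J : Finset (Finset V)}
    (hJ : ∀ S ∈ J, t ≤ #S) {F : Finset (Finset (Finset V))}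
    (hF : F ⊆ J.image (·.powersetCard t)) : #(configOf F) = #F :=
  card_image_of_injOn fun f hf f' hf' h => by
    obtain ⟨S, hS, rfl⟩ := mem_image.mp (hF hf)
    obtain ⟨S', hS', rfl⟩ := mem_image.mp (hF hf')
    simp only [sup_id_powersetCard ht (hJ S hS), sup_id_powersetCard ht (hJ S' hS')] at h
    rw [h]

lemma configOf_of_mem_confSystem {K : Finset (Finset V)} {s t ℓ : ℕ} (ht : t ≠ 0)
    (hts : t ≤ s) (hK : ∀ S ∈ K, #S = s) {c : Finset (Finset (Finset V))}
    (hc : c ∈ confSystem K s t ℓ) :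
    configOf c ⊆ K ∧ #(configOf c) = #c ∧ 3 ≤ #c ∧ #c ≤ ℓ ∧ MinimalBad s t (configOf c) ∧
      (configOf c).image (·.powersetCard t) = c := by
  simp only [confSystem, mem_image, mem_filter, mem_powerset] at hc
  obtain ⟨J, ⟨hJK, h3, hℓ, hJ⟩, rfl⟩ := hc
  have hJt : ∀ S ∈ J, t ≤ #S := fun S hS => hK S (hJK hS) ▸ hts
  have hcard := card_configOf_of_subset ht hJt subset_rfl
  rw [configOf_image_powersetCard ht hJt] at hcard ⊢
  exact ⟨hJK, hcard, hcard ▸ h3, hcard ▸ hℓ, hJ, rfl⟩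

def countConst (s t ℓ : ℕ) : ℕ := ((s - t) * ℓ + t + 1) * 2 ^ ((s - t) * ℓ + t).choose s

lemma degOf_sized_confSystem_le [Fintype V] (hV : 1 ≤ Fintype.card V)
    {K : Finset (Finset V)} {s t ℓ j : ℕ} (ht : t ≠ 0) (hts : t ≤ s) (hK : ∀ S ∈ K, #S = s)
    (hj : j ≤ ℓ) (F : Finset (Finset (Finset V))) :
    degOf (sized (confSystem K s t ℓ) j) F ≤
      countConst s t ℓ * Fintype.card V ^ ((s - t) * j + t - #((configOf F).sup id)) := by
  set n := (s - t) * j + t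
  set A := (configOf F).sup id
  have hmaps : Set.MapsTo configOf
      (((sized (confSystem K s t ℓ) j).filter fun c => F ⊆ c : Finset _) :
        Set (Finset (Finset (Finset V))))
      (({J : Finset (Finset V) | A ⊆ J.sup id ∧ (∀ S ∈ J, #S = s) ∧ #(J.sup id) ≤ n} :
        Finset _) : Set (Finset (Finset V))) := fun c hc => by
    rw [mem_coe, mem_filter, sized, mem_filter] at hc
    rw [mem_coe, mem_filter]
    refine ⟨mem_univ _, ?_⟩
    obtain ⟨⟨hc, rfl⟩, hFc⟩ := hc
    obtain ⟨hcK, hcard, -, -, hbad, -⟩ := configOf_of_mem_confSystem ht hts hK hc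
    exact ⟨sup_mono (configOf_mono hFc), fun S hS => hK S (hcK hS),
      hbad.1.2.trans_eq (by rw [hcard])⟩
  have hinj : Set.InjOn configOf
      (((sized (confSystem K s t ℓ) j).filter fun c => F ⊆ c : Finset _) :
        Set (Finset (Finset (Finset V)))) :=
    fun c hc c' hc' h => by
      rw [mem_coe, mem_filter, sized, mem_filter] at hc hc'
      rw [← (configOf_of_mem_confSystem ht hts hK hc.1.1).2.2.2.2.2,
        ← (configOf_of_mem_confSystem ht hts hK hc'.1.1).2.2.2.2.2, h]
  have hn : n ≤ (s - t) * ℓ + t := Nat.add_le_add_right (Nat.mul_le_mul_left _ hj) t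
  calc degOf (sized (confSystem K s t ℓ) j) F
      ≤ #{J : Finset (Finset V) | A ⊆ J.sup id ∧ (∀ S ∈ J, #S = s) ∧ #(J.sup id) ≤ n} :=
        card_le_card_of_injOn _ hmaps hinj
    _ ≤ (n + 1) * Fintype.card V ^ (n - #A) * 2 ^ n.choose s :=
        card_uniform_families_le hV A s n
    _ ≤ countConst s t ℓ * Fintype.card V ^ (n - #A) := by
        rw [countConst, mul_right_comm]
        gcongr
        exact one_le_two

lemma card_le_of_mem_confSystem {K : Finset (Finset V)} {s t ℓ : ℕ}
    {c : Finset (Finset (Finset V))} (hc : c ∈ confSystem K s t ℓ) : #c ≤ ℓ := by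
  simp only [confSystem, mem_image, mem_filter, mem_powerset] at hc
  obtain ⟨J, ⟨-, -, hℓ, -⟩, rfl⟩ := hc
  exact card_image_le.trans hℓ

lemma degOf_sized_confSystem_eq_zero {K : Finset (Finset V)} {s t ℓ j : ℕ} (hj : ℓ < j)
    (F : Finset (Finset (Finset V))) : degOf (sized (confSystem K s t ℓ) j) F = 0 := by
  by_contra hne
  obtain ⟨c, hc, rfl, -⟩ := exists_of_degOf_sized_pos (Nat.pos_of_ne_zero hne)
  exact hj.not_ge (card_le_of_mem_confSystem hc)

lemma degOf_sized_confSystem_singleton_le [Fintype V] (hV : 1 ≤ Fintype.card V)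
    {K : Finset (Finset V)} {s t ℓ j : ℕ} (ht : t ≠ 0) (hts : t ≤ s) (hK : ∀ S ∈ K, #S = s)
    (e : Finset (Finset V)) :
    degOf (sized (confSystem K s t ℓ) j) {e} ≤
      countConst s t ℓ * Fintype.card V ^ ((s - t) * (j - 1)) := by
  rcases Nat.eq_zero_or_pos (degOf (sized (confSystem K s t ℓ) j) {e}) with h | h
  · exact h ▸ Nat.zero_le _
  obtain ⟨c, hc, rfl, hec⟩ := exists_of_degOf_sized_pos h
  obtain ⟨hcK, -, -, hcℓ, -, hcJ⟩ := configOf_of_mem_confSystem ht hts hK hc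
  obtain ⟨S, hS, rfl⟩ := mem_image.mp (hcJ ▸ singleton_subset_iff.mp hec)
  have hspan : #((configOf {S.powersetCard t}).sup id) = s := by
    rw [configOf, image_singleton, sup_singleton, id, sup_id_powersetCard ht (hK S (hcK hS) ▸ hts),
      hK S (hcK hS)]
  have hexp : (s - t) * #c + t - s = (s - t) * (#c - 1) := by
    rw [Nat.mul_sub_one]
    omega
  simpa only [hspan, hexp] using degOf_sized_confSystem_le hV ht hts hK hcℓ {S.powersetCard t}

lemma degOf_sized_confSystem_le_of_two_le [Fintype V] (hV : 1 ≤ Fintype.card V)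
    {K : Finset (Finset V)} {s t ℓ j : ℕ} (ht : t ≠ 0) (hts : t ≤ s) (hK : ∀ S ∈ K, #S = s)
    {F : Finset (Finset (Finset V))} (hF : 2 ≤ #F) (hFj : #F < j) :
    degOf (sized (confSystem K s t ℓ) j) F ≤
      countConst s t ℓ * Fintype.card V ^ ((s - t) * (j - #F) - 1) := by
  rcases Nat.eq_zero_or_pos (degOf (sized (confSystem K s t ℓ) j) F) with h | h
  · exact h ▸ Nat.zero_le _
  obtain ⟨c, hc, rfl, hFc⟩ := exists_of_degOf_sized_pos h
  obtain ⟨hcK, hcard, -, hcℓ, hmin, hcJ⟩ := configOf_of_mem_confSystem ht hts hK hc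
  have hFcard : #(configOf F) = #F :=
    card_configOf_of_subset ht (fun S hS => hK S (hcK hS) ▸ hts) (hcJ.symm ▸ hFc)
  -- `configOf F ⊆ configOf c` keeps the small pairwise intersections, so minimality can only
  -- fail the span condition
  have hspan : (s - t) * #F + t < #((configOf F).sup id) := by
    by_contra! hle
    refine hmin.2 (configOf F) (configOf_mono hFc) (hFcard ▸ hF) (hFcard ▸ hcard ▸ hFj)
      ⟨fun S hS S' hS' => hmin.1.1 S (configOf_mono hFc hS) S' (configOf_mono hFc hS'), ?_⟩
    rwa [hFcard]
  have hsplit : (s - t) * (#c - #F) = (s - t) * #c - (s - t) * #F := Nat.mul_sub _ _ _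
  have hle : (s - t) * #F ≤ (s - t) * #c := Nat.mul_le_mul_left _ hFj.le
  refine (degOf_sized_confSystem_le hV ht hts hK hcℓ F).trans ?_
  exact Nat.mul_le_mul_left _ (Nat.pow_le_pow_right hV (by omega))

theorem bounded_confSystem [Fintype V] {K : Finset (Finset V)} {s t ℓ ℓ' : ℕ} {a d ε : ℝ}
    (ht : t ≠ 0) (hts : t < s) (hK : ∀ S ∈ K, #S = s) (hV : 1 ≤ Fintype.card V)
    (ha0 : 0 < a) (ha1 : a ≤ 1) (hd : a * (Fintype.card V : ℝ) ^ (s - t) ≤ d)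
    (hℓ : ℓ ≤ ℓ') (hℓ' : (countConst s t ℓ : ℝ) ≤ ℓ' * a ^ ℓ)
    (hsqrt : (countConst s t ℓ : ℝ) ≤ a ^ ℓ * √(Fintype.card V : ℝ))
    (hε0 : 0 ≤ ε) (hε : ((s - t : ℕ) : ℝ) * ε ≤ 1 / 2) :
    Bounded (confSystem K s t ℓ) d ℓ' ε := by
  have hd0 : 0 ≤ d := le_trans (by positivity) hd
  have hVR : (1 : ℝ) ≤ Fintype.card V := by exact_mod_cast hV
  refine ⟨fun c hc => ?_, fun j hj3 _ e => ?_, fun j j' _ _ hj' hj'j F hF => ?_⟩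
  · obtain ⟨-, -, h3, hℓc, -⟩ := configOf_of_mem_confSystem ht hts.le hK hc
    exact ⟨h3, hℓc.trans hℓ⟩
  · rcases le_or_gt j ℓ with hjℓ | hjℓ
    · calc (degOf (sized (confSystem K s t ℓ) j) {e} : ℝ)
          ≤ countConst s t ℓ * (Fintype.card V : ℝ) ^ ((s - t) * (j - 1)) := by
            exact_mod_cast degOf_sized_confSystem_singleton_le hV ht hts.le hK e
        _ ≤ ℓ' * d ^ (j - 1) :=
            mul_pow_mul_le ha0.le ha1 (by positivity) hd (by positivity) hℓ' (by omega)
        _ = ℓ' * d ^ ((j : ℝ) - 1) := by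
            rw [← Real.rpow_natCast, Nat.cast_sub (by omega), Nat.cast_one]
    · rw [degOf_sized_confSystem_eq_zero hjℓ, Nat.cast_zero]
      positivity
  · rcases le_or_gt j ℓ with hjℓ | hjℓ
    · subst hF
      calc (degOf (sized (confSystem K s t ℓ) j) F : ℝ)
          ≤ countConst s t ℓ * (Fintype.card V : ℝ) ^ ((s - t) * (j - #F) - 1) := by
            exact_mod_cast degOf_sized_confSystem_le_of_two_le hV ht hts.le hK hj' (by omega)
        _ ≤ d ^ (((j - #F : ℕ) : ℝ) - ε) :=
            mul_pow_sub_one_le_rpow ha0 ha1 hVR hd hsqrt (by omega) (by omega) (by omega)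
              hε0 hε
        _ = d ^ ((j : ℝ) - #F - ε) := by rw [Nat.cast_sub (by omega)]
    · rw [degOf_sized_confSystem_eq_zero hjℓ, Nat.cast_zero]
      positivity

/-- §A.3.2: the conflict hypergraph of minimal bad configurations is
`(d, ℓ', ε')`-bounded with `d = (1 + m^{-ε}) c m^{s-t}`. -/
theorem statement15 :
    ∀ c0 : ℝ, 0 < c0 → ∀ ℓ s t : ℕ, 2 ≤ ℓ → 2 ≤ t → t < s →
    ∃ ℓ' : ℕ, ∃ ε0 : ℝ, 0 < ε0 ∧
      ∀ ε' ε : ℝ, 0 < ε' → ε' < ε0 → 0 < ε → ε < ε0 →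
        ∃ m0 : ℕ, ∀ m : ℕ, m0 ≤ m → ∀ c : ℝ, c0 ≤ c →
          ∀ (W : Type u) [Fintype W] [DecidableEq W],
          ∀ (G K : Finset (Finset W)),
            Fintype.card W = m →
            -- G is a t-graph on m vertices
            (∀ e ∈ G, e.card = t) →
            -- K is a collection of s-sets inducing cliques in G
            (∀ S ∈ K, S.card = s ∧ InducesClique G t S) →
            -- every edge of G lies in (1 ± m^{-ε}) c m^{s-t} elements of K
            (∀ e ∈ G,
              (1 - (m : ℝ) ^ (-ε)) * c * (m : ℝ) ^ (s - t) ≤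
                  ((K.filter fun S => e ⊆ S).card : ℝ) ∧
              ((K.filter fun S => e ⊆ S).card : ℝ) ≤
                  (1 + (m : ℝ) ^ (-ε)) * c * (m : ℝ) ^ (s - t)) →
            Bounded (confSystem K s t ℓ)
              ((1 + (m : ℝ) ^ (-ε)) * c * (m : ℝ) ^ (s - t)) ℓ' ε' := by
  intro c0 hc0 ℓ s t _ ht hts
  set a := min c0 1
  have ha0 : 0 < a := lt_min hc0 one_pos
  set Λ : ℝ := countConst s t ℓ / a ^ ℓ
  have hΛ : (countConst s t ℓ : ℝ) = Λ * a ^ ℓ := (div_mul_cancel₀ _ (by positivity)).symm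
  have hq : (0 : ℝ) < (s - t : ℕ) := by exact_mod_cast Nat.sub_pos_of_lt hts
  refine ⟨ℓ + ⌈Λ⌉₊, 1 / (2 * (s - t : ℕ)), by positivity, fun ε' ε hε'0 hε' _ _ =>
    ⟨max 1 ⌈Λ ^ 2⌉₊, fun m hm c hc W _ _ G K hWm _ hK _ => ?_⟩⟩
  subst hWm
  have hΛm : Λ ≤ √(Fintype.card W : ℝ) := Real.le_sqrt_of_sq_le
    ((Nat.le_ceil _).trans (by exact_mod_cast le_of_max_le_right hm))
  refine bounded_confSystem (by omega) hts (fun S hS => (hK S hS).1) (le_of_max_le_left hm) ha0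
    (min_le_right _ _) ?_ (by omega) ?_ ?_ hε'0.le ?_
  · have hac : a ≤ (1 + (Fintype.card W : ℝ) ^ (-ε)) * c :=
      (min_le_left _ _).trans (hc.trans (le_mul_of_one_le_left (hc0.le.trans hc)
        (le_add_of_nonneg_right (Real.rpow_nonneg (Nat.cast_nonneg _) _))))
    gcongr
  · rw [hΛ]
    gcongr
    exact (Nat.le_ceil Λ).trans (by exact_mod_cast Nat.le_add_left _ ℓ)
  · rw [hΛ, mul_comm]
    gcongr
  · rw [lt_div_iff₀ (by positivity)] at hε'
    linarith

end CFM
end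
end
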